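/- arXiv:2208.07311 — 6 statements merged into one kernel-verified Lean document; each statement's English description precedes it below -/
import Mathlib

section
/- For any finite multiset of utility vectors: if a Lorenz dominating allocation exists, then an allocation is leximin if and only if it is Lorenz dominating. Precisely: let V be a nonempty finite set of vectors in ℝ^n; for a vector x let sort(x) be x sorted in ascending order. Say x Lorenz dominates V if for every y ∈ V and every k ∈ [n], the sum of the first k entries of sort(x) is at least the sum of the first k entries of sort(y). Say x is leximin in V if no y ∈ V has sort(y) lexicographically dominating sort(x). If some x* ∈ V Lorenz dominates V, then for all x ∈ V: x is leximin in V iff x Lorenz dominates V. -/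
/-- `x` sorted in ascending order. -/
noncomputable def sortv {n : ℕ} (x : Fin n → ℝ) : Fin n → ℝ := x ∘ Tuple.sort x

/-- `a` lexicographically dominates `b`. -/
def LexDom {n : ℕ} (a b : Fin n → ℝ) : Prop :=
  ∃ k : Fin n, (∀ j : Fin n, j < k → a j = b j) ∧ b k < a k

/-- `x` Lorenz dominates every member of `V`: all prefix sums of the sorted
vector of `x` are at least the corresponding prefix sums for any `y ∈ V`. -/
noncomputable def LorenzDom {n : ℕ} (V : Finset (Fin n → ℝ)) (x : Fin n → ℝ) : Prop :=
  ∀ y ∈ V, ∀ k : Fin n,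
    ∑ j ∈ Finset.univ.filter (· ≤ k), sortv y j ≤
      ∑ j ∈ Finset.univ.filter (· ≤ k), sortv x j

/-- `x` is leximin in `V`: no member of `V` lexicographically dominates it in sorted order. -/
noncomputable def Leximin {n : ℕ} (V : Finset (Fin n → ℝ)) (x : Fin n → ℝ) : Prop :=
  ∀ y ∈ V, ¬ LexDom (sortv y) (sortv x)

private lemma prefix_lt {n : ℕ} {a b : Fin n → ℝ} {k : Fin n}
    (h1 : ∀ j : Fin n, j < k → a j = b j) (h2 : b k < a k) :
    ∑ j ∈ Finset.univ.filter (· ≤ k), b j < ∑ j ∈ Finset.univ.filter (· ≤ k), a j := by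
  apply Finset.sum_lt_sum
  · intro i hi
    simp only [Finset.mem_filter] at hi
    rcases lt_or_eq_of_le hi.2 with h | h
    · exact le_of_eq (h1 i h).symm
    · subst h; exact le_of_lt h2
  · exact ⟨k, by simp, h2⟩

private lemma lorenz_to_leximin {n : ℕ} (V : Finset (Fin n → ℝ)) (x : Fin n → ℝ)
    (hx : LorenzDom V x) : Leximin V x := by
  rintro y hy ⟨k, h1, h2⟩
  have := hx y hy k
  have := prefix_lt h1 h2
  linarith

theorem leximin_iff_lorenz {n : ℕ} (V : Finset (Fin n → ℝ)) (hV : V.Nonempty)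
    (xstar : Fin n → ℝ) (hxstar : xstar ∈ V) (hlorenz : LorenzDom V xstar) :
    ∀ x ∈ V, (Leximin V x ↔ LorenzDom V x) := by
  intro x hx
  constructor
  · intro hlex
    have hsort : sortv x = sortv xstar := by
      by_contra h
      have hne : ∃ j, sortv x j ≠ sortv xstar j := Function.ne_iff.mp h
      set S : Finset (Fin n) := Finset.univ.filter (fun j => sortv x j ≠ sortv xstar j) with hS
      have hSne : S.Nonempty := by
        obtain ⟨j, hj⟩ := hne
        exact ⟨j, by simp [hS, hj]⟩
      set k := S.min' hSne with hk
      have hkS : k ∈ S := S.min'_mem hSne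
      have hkne : sortv x k ≠ sortv xstar k := by
        simpa [hS] using hkS
      have hlt : ∀ j : Fin n, j < k → sortv x j = sortv xstar j := by
        intro j hj
        by_contra hjne
        have : k ≤ j := S.min'_le j (by simp [hS, hjne])
        exact absurd hj (not_lt.mpr this)
      rcases lt_or_gt_of_ne hkne with hc | hc
      · exact hlex xstar hxstar ⟨k, fun j hj => (hlt j hj).symm, hc⟩
      · have h1 := hlorenz x hx k
        have h2 := prefix_lt (a := sortv x) (b := sortv xstar)
          (fun j hj => hlt j hj) hc
        linarith
    intro y hy k
    calc ∑ j ∈ Finset.univ.filter (· ≤ k), sortv y j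
        ≤ ∑ j ∈ Finset.univ.filter (· ≤ k), sortv xstar j := hlorenz y hy k
      _ = ∑ j ∈ Finset.univ.filter (· ≤ k), sortv x j := by rw [hsort]
  · exact lorenz_to_leximin V x
end

section
/- Any leximin element and any Lorenz dominating element of a set of vectors have the same sorted vector: if x* ∈ V Lorenz dominates V and x ∈ V is leximin in V, then sort(x) = sort(x*). -/
theorem leximin_lorenz_same_sorted {n : ℕ} (V : Finset (Fin n → ℝ))
    (xstar x : Fin n → ℝ) (hxstar : xstar ∈ V) (hx : x ∈ V)
    (hlorenz : LorenzDom V xstar) (hleximin : Leximin V x) :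
    sortv x = sortv xstar := by
  classical
  by_contra h
  have hne : ∃ i, sortv x i ≠ sortv xstar i := by
    by_contra h'
    push_neg at h'
    exact h (funext h')
  obtain ⟨k, hkmem, hmin⟩ := Finset.exists_min_image
    (Finset.univ.filter fun i => sortv x i ≠ sortv xstar i) id
    (by obtain ⟨i, hi⟩ := hne; exact ⟨i, by simp [hi]⟩)
  have hk : sortv x k ≠ sortv xstar k := by simpa using hkmem
  have heq : ∀ j, j < k → sortv x j = sortv xstar j := by
    intro j hj
    by_contra hne'
    have := hmin j (by simp [hne'])
    exact absurd hj (not_lt.mpr this)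
  rcases lt_trichotomy (sortv x k) (sortv xstar k) with hlt | heqk | hgt
  · exact hleximin xstar hxstar ⟨k, fun j hj => (heq j hj).symm, hlt⟩
  · exact hk heqk
  · have hsum := hlorenz x hx k
    have hsplit : (Finset.univ.filter (· ≤ k)) = insert k (Finset.univ.filter (· < k)) := by
      ext j; simp [le_iff_lt_or_eq, or_comm]
    rw [hsplit, Finset.sum_insert (by simp), Finset.sum_insert (by simp)] at hsum
    have hlteq : ∑ j ∈ Finset.univ.filter (· < k), sortv x j
        = ∑ j ∈ Finset.univ.filter (· < k), sortv xstar j :=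
      Finset.sum_congr rfl (fun j hj => heq j (by simpa using hj))
    linarith
end

section
/- The gain function φ(x,i) = (−x_i, −π(i)) (compared lexicographically), where π : [n] → [n] is a permutation, satisfies condition (G1) for the perturbed-leximin justice criterion: for any x ∈ ℤ_{≥0}^n and indices i ≠ j, letting y = x + e_i and z = x + e_j, and defining the perturbed vector x' by x'_h = x_h + π(h)/n² (with n ≥ 2), if φ(x,i) > φ(x,j) lexicographically then sort(y') lexicographically dominates sort(z'), where y', z' are the perturbed versions of y, z. -/
/-!
The perturbation makes all entries of `x'` distinct (their fractional parts `(π h + 1) / n²`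
are), and `φ(x,i) > φ(x,j)` says exactly that `a := x'_i < x'_j`. Then `y'` and `z'` agree at
every index where either is below `a`, `z'` takes the value `a` (at `i`) and `y'` does not.
Hence `sort y'` and `sort z'` agree in the first `k := #{h | z'_h < a}` positions, while at
position `k` the vector `sort z'` has `a` and `sort y'` something larger.
-/

open Finset Function

lemma card_filter_sortv {n : ℕ} (v : Fin n → ℝ) (P : ℝ → Prop) [DecidablePred P] :
    #{m | P (sortv v m)} = #{h | P (v h)} :=
  card_equiv (Tuple.sort v) (fun m => by rw [mem_filter]; simp [sortv])

lemma sortv_iff_lt_card_filter {n : ℕ} (v : Fin n → ℝ) {P : ℝ → Prop} [DecidablePred P]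
    (hP : Antitone P) (m : Fin n) : P (sortv v m) ↔ (m : ℕ) < #{h | P (v h)} := by
  have hmono : Monotone (sortv v) := Tuple.monotone_sort v
  rw [← card_filter_sortv]
  constructor
  · intro hm
    have hsub : Iic m ⊆ univ.filter (fun m => P (sortv v m)) := fun m' hm' => by
      simpa using hP (hmono (mem_Iic.mp hm')) hm
    simpa using card_le_card hsub
  · intro hlt
    by_contra hm
    have hsub : univ.filter (fun m => P (sortv v m)) ⊆ Iio m := fun m' hm' => by
      simp only [mem_filter, mem_univ, true_and] at hm'
      exact mem_Iio.mpr (lt_of_not_ge fun hge => hm (hP (hmono hge) hm'))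
    have := card_le_card hsub
    simp only [Fin.card_Iio] at this
    omega

lemma filter_eq_of_eq_of_lt {n : ℕ} {u v : Fin n → ℝ} {t : ℝ}
    (hagree : ∀ h, u h < t ∨ v h < t → u h = v h) {P : ℝ → Prop} [DecidablePred P]
    (hP : ∀ s, P s → s < t) : univ.filter (fun h => P (u h)) = univ.filter (fun h => P (v h)) := by
  ext h
  simp only [mem_filter, mem_univ, true_and]
  constructor
  · intro hu; rwa [← hagree h (Or.inl (hP _ hu))]
  · intro hv; rwa [hagree h (Or.inr (hP _ hv))]

lemma lexDom_sortv_of_eq_of_lt {n : ℕ} {u v : Fin n → ℝ} {t : ℝ}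
    (hagree : ∀ h, u h < t ∨ v h < t → u h = v h) (hu : ∀ h, u h ≠ t) (hv : ∃ h, v h = t) :
    LexDom (sortv u) (sortv v) := by
  obtain ⟨h₀, hh₀⟩ := hv
  have hlt : #{h | u h < t} = #{h | v h < t} :=
    congrArg card (filter_eq_of_eq_of_lt (P := (· < t)) hagree fun _ hs => hs)
  have hle_u : #{h | u h ≤ t} = #{h | u h < t} := by
    congr 1; ext h; simp [le_iff_lt_or_eq, hu h]
  have hle_v : #{h | v h < t} < #{h | v h ≤ t} :=
    card_lt_card <| (ssubset_iff_of_subset (monotone_filter_right _ fun _ _ => le_of_lt)).mpr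
      ⟨h₀, by simp [hh₀]⟩
  have hsortv_le : ∀ s < t, ∀ m, sortv u m ≤ s ↔ sortv v m ≤ s := fun s hs m => by
    rw [sortv_iff_lt_card_filter u (fun _ _ hab h => hab.trans h),
      sortv_iff_lt_card_filter v (fun _ _ hab h => hab.trans h)]
    congr! 2
    exact filter_eq_of_eq_of_lt (P := (· ≤ s)) hagree fun _ h => h.trans_lt hs
  have hK : #{h | v h < t} < n := hle_v.trans_le ((card_filter_le _ _).trans_eq (by simp))
  refine ⟨⟨_, hK⟩, fun m hm => ?_, ?_⟩
  · have hm' : (m : ℕ) < #{h | v h < t} := hm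
    have hmu : sortv u m < t :=
      (sortv_iff_lt_card_filter u (fun _ _ hab h => hab.trans_lt h) m).mpr (hlt ▸ hm')
    have hmv : sortv v m < t :=
      (sortv_iff_lt_card_filter v (fun _ _ hab h => hab.trans_lt h) m).mpr hm'
    exact le_antisymm ((hsortv_le _ hmv m).mpr le_rfl) ((hsortv_le _ hmu m).mp le_rfl)
  · have hv_le : sortv v ⟨_, hK⟩ ≤ t :=
      (sortv_iff_lt_card_filter v (fun _ _ hab h => hab.trans h) _).mpr hle_v
    have hu_gt : ¬ sortv u ⟨_, hK⟩ ≤ t := by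
      rw [sortv_iff_lt_card_filter u (fun _ _ hab h => hab.trans h), hle_u, hlt]
      exact lt_irrefl _
    exact hv_le.trans_lt (not_le.mp hu_gt)

lemma lexDom_sortv_update_add {n : ℕ} {w : Fin n → ℝ} (hw : Injective w) {i j : Fin n}
    (hij : i ≠ j) (hlt : w i < w j) {δ : ℝ} (hδ : 0 < δ) :
    LexDom (sortv (update w i (w i + δ))) (sortv (update w j (w j + δ))) := by
  refine lexDom_sortv_of_eq_of_lt (t := w i) (fun h hh => ?_) (fun h => ?_) ⟨i, by simp [hij]⟩
  · rcases eq_or_ne h i with rfl | hi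
    · simp only [update_self, update_of_ne hij] at hh
      rcases hh with hh | hh <;> linarith
    rcases eq_or_ne h j with rfl | hj
    · simp only [update_self, update_of_ne hi] at hh
      rcases hh with hh | hh <;> linarith
    simp [hi, hj]
  · rcases eq_or_ne h i with rfl | hi
    · simpa using hδ.ne'
    · simpa [hi] using hw.ne hi

lemma natCast_add_injective {ι : Type*} (m : ι → ℕ) {r : ι → ℝ} (hr : Injective r)
    (hr0 : ∀ h, 0 ≤ r h) (hr1 : ∀ h, r h < 1) : Injective fun h => (m h : ℝ) + r h := by
  intro a b hab
  apply hr
  simpa [Int.fract_eq_self.mpr ⟨hr0 _, hr1 _⟩] using congrArg Int.fract hab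

lemma natCast_add_lt_natCast_add {m m' : ℕ} {r r' : ℝ} (h : m < m' ∨ m = m' ∧ r < r')
    (hr : r < 1) (hr' : 0 ≤ r') : (m : ℝ) + r < m' + r' := by
  rcases h with h | ⟨rfl, h⟩
  · have : (m : ℝ) + 1 ≤ m' := by exact_mod_cast h
    linarith
  · linarith

lemma natCast_update_add_one {ι : Type*} [DecidableEq ι] (m : ι → ℕ) (r : ι → ℝ) (i : ι) :
    (fun h => ((update m i (m i + 1) h : ℕ) : ℝ) + r h)
      = update (fun h => (m h : ℝ) + r h) i (m i + r i + 1) := by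
  funext h
  rcases eq_or_ne h i with rfl | hi
  · simp only [update_self, Nat.cast_add, Nat.cast_one]; ring
  · simp [hi]

theorem prioritized_lorenz_G1 {n : ℕ} (hn : 2 ≤ n) (π : Equiv.Perm (Fin n))
    (x : Fin n → ℕ) (i j : Fin n) (hij : i ≠ j)
    -- φ(x,i) = (−x_i, −π(i)) > φ(x,j) lexicographically:
    (hphi : x i < x j ∨ (x i = x j ∧ (π i : ℕ) < (π j : ℕ)))
    (y z : Fin n → ℕ)
    (hy : y = Function.update x i (x i + 1))
    (hz : z = Function.update x j (x j + 1))
    -- perturbed versions: add π(h)/n² (with π(h) ∈ [n] encoded as (π h).val + 1)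
    (y' z' : Fin n → ℝ)
    (hy' : y' = fun h => (y h : ℝ) + ((π h : ℕ) + 1) / (n ^ 2 : ℕ))
    (hz' : z' = fun h => (z h : ℝ) + ((π h : ℕ) + 1) / (n ^ 2 : ℕ)) :
    LexDom (sortv y') (sortv z') := by
  set r : Fin n → ℝ := fun h => ((π h : ℕ) + 1) / (n ^ 2 : ℕ)
  have hN : (0 : ℝ) < (n ^ 2 : ℕ) := by positivity
  have hr0 (h : Fin n) : 0 ≤ r h := by positivity
  have hr1 (h : Fin n) : r h < 1 := by
    rw [div_lt_one hN]
    have : (π h : ℕ) + 1 < n ^ 2 := by nlinarith [(π h).isLt]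
    exact_mod_cast this
  have hr_lt {a b : Fin n} (hab : (π a : ℕ) < π b) : r a < r b :=
    div_lt_div_of_pos_right (by exact_mod_cast Nat.add_lt_add_right hab 1) hN
  have hr : Injective r := fun a b hab =>
    π.injective <| Fin.ext <| by exact_mod_cast add_right_cancel ((div_left_inj' hN.ne').mp hab)
  subst hy hz hy' hz'
  rw [natCast_update_add_one, natCast_update_add_one]
  exact lexDom_sortv_update_add (natCast_add_injective x hr hr0 hr1) hij
    (natCast_add_lt_natCast_add (hphi.imp_right (And.imp_right hr_lt)) (hr1 i) (hr0 j)) one_pos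
end

section
/- For the weighted leximin gain function φ(x,i) = (−x_i/w_i, −w_i) with positive weights w_i, condition (G1) holds: for x ∈ ℤ_{≥0}^n, i ≠ j, y = x + e_i, z = x + e_j, if φ(x,i) > φ(x,j) lexicographically, then the sorted vector of (y_h/w_h)_h lexicographically dominates the sorted vector of (z_h/w_h)_h; and if φ(x,i) = φ(x,j), the two sorted weighted vectors are equal. -/
/-!
A sorted vector is determined by its counting function `t ↦ #{h | v h ≤ t}`: the `k`-th
smallest entry is `≤ t` exactly when more than `k` entries are. Raising one coordinate of `x`
changes this function only through the old and new values of that coordinate, so comparing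
`y` with `z` reduces to four indicator functions. If `x i / w i < x j / w j`, the counts first
differ at `t = x i / w i`, where `z` has one entry more; if the ratios are equal and
`w i < w j`, they first differ at the new value `(x j + 1) / w j < (x i + 1) / w i`.
-/

open Finset Function

noncomputable def countLE {ι : Type*} [Fintype ι] (v : ι → ℝ) (t : ℝ) : ℕ :=
  #{h | v h ≤ t}

section countLE

variable {ι : Type*} [Fintype ι]

lemma countLE_le_card (v : ι → ℝ) (t : ℝ) : countLE v t ≤ Fintype.card ι :=
  card_filter_le _ _

lemma countLE_mono (v : ι → ℝ) {s t : ℝ} (hst : s ≤ t) : countLE v s ≤ countLE v t :=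
  card_le_card fun _ ↦ by simpa using fun h ↦ h.trans hst

lemma countLE_comp_equiv (v : ι → ℝ) (σ : Equiv.Perm ι) (t : ℝ) :
    countLE (v ∘ σ) t = countLE v t :=
  card_equiv σ (by simp)

lemma countLE_update [DecidableEq ι] (v : ι → ℝ) (i : ι) (a t : ℝ) :
    countLE (update v i a) t + (if v i ≤ t then 1 else 0) =
      countLE v t + (if a ≤ t then 1 else 0) := by
  simp only [countLE, card_filter]
  rw [← add_sum_erase _ _ (mem_univ i), ← add_sum_erase _ _ (mem_univ i),
    sum_congr rfl fun h hh ↦ by rw [update_of_ne (ne_of_mem_erase hh)]]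
  simp only [update_self]
  omega

end countLE

section sortv

variable {n : ℕ}

lemma sortv_le_iff (v : Fin n → ℝ) (k : Fin n) (t : ℝ) :
    sortv v k ≤ t ↔ (k : ℕ) < countLE v t := by
  rw [sortv, ← Tuple.lt_card_le_iff_apply_le_of_monotone (Tuple.monotone_sort v)]
  exact Iff.of_eq (congrArg _ (countLE_comp_equiv v _ t))

lemma sortv_eq_of_countLE_eq {a b : Fin n → ℝ} (h : ∀ t, countLE a t = countLE b t) :
    sortv a = sortv b :=
  funext fun k ↦ le_antisymm
    ((sortv_le_iff a k _).2 (h _ ▸ (sortv_le_iff b k _).1 le_rfl))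
    ((sortv_le_iff b k _).2 (h _ ▸ (sortv_le_iff a k _).1 le_rfl))

/-- The entries of rank below `countLE a t₀` agree, and at that rank `sortv b` is `≤ t₀` while
`sortv a` is not. -/
lemma lexDom_sortv_of_countLE {a b : Fin n → ℝ} (t₀ : ℝ)
    (h_lt : ∀ t < t₀, countLE a t = countLE b t)
    (h_eq : countLE a t₀ + 1 = countLE b t₀) :
    LexDom (sortv a) (sortv b) := by
  have hk : countLE a t₀ < n := by
    have := countLE_le_card b t₀
    simp only [Fintype.card_fin] at this
    omega
  have le_of_rank_lt {c d : Fin n → ℝ} (hcd : ∀ t < t₀, countLE c t = countLE d t)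
      (hd : countLE a t₀ ≤ countLE d t₀) (j : Fin n) (hj : (j : ℕ) < countLE a t₀) :
      sortv d j ≤ sortv c j := by
    have hc := (sortv_le_iff c j _).1 le_rfl
    rw [sortv_le_iff]
    rcases lt_or_ge (sortv c j) t₀ with hlt | hge
    · exact hcd _ hlt ▸ hc
    · exact (hj.trans_le hd).trans_le (countLE_mono d hge)
  refine ⟨⟨countLE a t₀, hk⟩, fun j hj ↦ le_antisymm ?_ ?_, ?_⟩
  · exact le_of_rank_lt (fun t ht ↦ (h_lt t ht).symm) le_rfl j hj
  · exact le_of_rank_lt h_lt (by omega) j hj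
  · have hb : sortv b ⟨countLE a t₀, hk⟩ ≤ t₀ := (sortv_le_iff _ _ _).2 (by simp; omega)
    have ha : ¬ sortv a ⟨countLE a t₀, hk⟩ ≤ t₀ := by simp [sortv_le_iff]
    exact hb.trans_lt (not_le.1 ha)

end sortv

lemma natCast_update_succ_div {ι : Type*} [DecidableEq ι] {x : ι → ℕ} {w u : ι → ℝ}
    (hu : ∀ h, u h = x h / w h) (k : ι) :
    (fun h ↦ (update x k (x k + 1) h : ℝ) / w h) = update u k (u k + 1 / w k) := by
  funext h
  rw [apply_update (fun h (m : ℕ) ↦ (m : ℝ) / w h), hu, ← funext hu]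
  push_cast
  rw [add_div]

theorem weighted_leximin_G1_general {n : ℕ} (w : Fin n → ℝ) (hw : ∀ h, 0 < w h)
    (x : Fin n → ℕ) (i j : Fin n)
    (y z : Fin n → ℕ)
    (hy : y = Function.update x i (x i + 1))
    (hz : z = Function.update x j (x j + 1)) :
    -- φ(x,i) > φ(x,j) lexicographically implies sorted weighted vector of y dominates z:
    (((x i : ℝ) / w i < (x j : ℝ) / w j ∨
        ((x i : ℝ) / w i = (x j : ℝ) / w j ∧ w i < w j)) →
      LexDom (sortv (fun h => (y h : ℝ) / w h)) (sortv (fun h => (z h : ℝ) / w h))) ∧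
    -- φ(x,i) = φ(x,j) implies the two sorted weighted vectors are equal:
    (((x i : ℝ) / w i = (x j : ℝ) / w j ∧ w i = w j) →
      sortv (fun h => (y h : ℝ) / w h) = sortv (fun h => (z h : ℝ) / w h)) := by
  subst hy hz
  set u : Fin n → ℝ := fun h ↦ (x h : ℝ) / w h
  have hu_def (h : Fin n) : u h = x h / w h := rfl
  rw [natCast_update_succ_div hu_def, natCast_update_succ_div hu_def]
  have hi := countLE_update u i (u i + 1 / w i)
  have hj := countLE_update u j (u j + 1 / w j)
  have hdi : 0 < 1 / w i := one_div_pos.2 (hw i)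
  have hdj : 0 < 1 / w j := one_div_pos.2 (hw j)
  refine ⟨?_, fun ⟨hu, hwij⟩ ↦ sortv_eq_of_countLE_eq fun t ↦ ?_⟩
  · rintro (hu | ⟨hu, hwij⟩)
    · refine lexDom_sortv_of_countLE (u i) (fun t ht ↦ ?_) ?_
      · have hy := hi t
        have hz := hj t
        split_ifs at hy hz <;> first | omega | linarith
      · have hy := hi (u i)
        have hz := hj (u i)
        split_ifs at hy hz <;> first | omega | linarith
    · have hd : 1 / w j < 1 / w i := one_div_lt_one_div_of_lt (hw i) hwij
      refine lexDom_sortv_of_countLE (u j + 1 / w j) (fun t ht ↦ ?_) ?_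
      · have hy := hi t
        have hz := hj t
        split_ifs at hy hz <;> first | omega | linarith
      · have hy := hi (u j + 1 / w j)
        have hz := hj (u j + 1 / w j)
        split_ifs at hy hz <;> first | omega | linarith
  · have hy := hi t
    have hz := hj t
    rw [show u i = u j from hu, hwij] at hy ⊢
    omega

theorem weighted_leximin_G1 {n : ℕ} (w : Fin n → ℝ) (hw : ∀ h, 0 < w h)
    (x : Fin n → ℕ) (i j : Fin n) (hij : i ≠ j)
    (y z : Fin n → ℕ)
    (hy : y = Function.update x i (x i + 1))
    (hz : z = Function.update x j (x j + 1)) :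
    -- φ(x,i) > φ(x,j) lexicographically implies sorted weighted vector of y dominates z:
    (((x i : ℝ) / w i < (x j : ℝ) / w j ∨
        ((x i : ℝ) / w i = (x j : ℝ) / w j ∧ w i < w j)) →
      LexDom (sortv (fun h => (y h : ℝ) / w h)) (sortv (fun h => (z h : ℝ) / w h))) ∧
    -- φ(x,i) = φ(x,j) implies the two sorted weighted vectors are equal:
    (((x i : ℝ) / w i = (x j : ℝ) / w j ∧ w i = w j) →
      sortv (fun h => (y h : ℝ) / w h) = sortv (fun h => (z h : ℝ) / w h)) :=
  weighted_leximin_G1_general w hw x i j y z hy hz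
end

section
/- In the example with two agents having valuations v_i(S) = min(|S|, 2) over four goods and weights w_1 = 10, w_2 = 1: every allocation maximizing utilitarian social welfare gives each agent utility 2, and no such allocation is weighted-envy-free up to one good (WEF1), since agent 1's weighted utility 2/10 is strictly less than (v_1(X_2) − 1)/w_2 = 1. -/
/-!
Any two disjoint pairs of goods give welfare `2 + 2`, the largest value `min (·) 2 + min (·) 2`
can take, so a welfare maximiser gives each agent at least two goods. Removing one good from
agent 2's bundle leaves it worth at least `1`, while agent 1's weighted utility is only `2 / 10`.
-/

theorem exists_disjoint_finsets_card_eq {G : Type*} [Fintype G] [DecidableEq G] {a b : ℕ}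
    (h : a + b ≤ Fintype.card G) :
    ∃ Y₁ Y₂ : Finset G, Disjoint Y₁ Y₂ ∧ Y₁.card = a ∧ Y₂.card = b := by
  obtain ⟨Y₁, -, hY₁⟩ := Finset.exists_subset_card_eq (s := (Finset.univ : Finset G)) (n := a)
    (by rw [Finset.card_univ]; omega)
  obtain ⟨Y₂, hY₂sub, hY₂⟩ := Finset.exists_subset_card_eq (s := Finset.univ \ Y₁) (n := b)
    (by rw [Finset.card_univ_sdiff]; omega)
  exact ⟨Y₁, Y₂, Finset.disjoint_of_subset_right hY₂sub Finset.disjoint_sdiff, hY₁, hY₂⟩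

theorem min_card_eq_of_welfare_max {G : Type*} [Fintype G] (k : ℕ)
    (hG : k + k ≤ Fintype.card G) {X₁ X₂ : Finset G}
    (hmax : ∀ Y₁ Y₂ : Finset G, Disjoint Y₁ Y₂ →
      min Y₁.card k + min Y₂.card k ≤ min X₁.card k + min X₂.card k) :
    min X₁.card k = k ∧ min X₂.card k = k := by
  classical
  obtain ⟨Y₁, Y₂, hdisj, hY₁, hY₂⟩ := exists_disjoint_finsets_card_eq hG
  have := hmax Y₁ Y₂ hdisj
  rw [hY₁, hY₂] at this
  omega

theorem one_le_min_card_erase {G : Type*} [DecidableEq G] {s : Finset G} {g : G}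
    (hg : g ∈ s) (hs : min s.card 2 = 2) : (1 : ℝ) ≤ min ((s.erase g).card : ℝ) 2 := by
  have : 1 ≤ (s.erase g).card := by
    rw [Finset.card_erase_of_mem hg]
    omega
  exact le_min (by exact_mod_cast this) one_le_two

theorem wef1_failure_example_general {G : Type*} [DecidableEq G] [Fintype G]
    (hG : Fintype.card G = 4)
    (X₁ X₂ : Finset G)
    -- X maximizes utilitarian social welfare with v_i(S) = min(|S|,2):
    (hmax : ∀ Y₁ Y₂ : Finset G, Disjoint Y₁ Y₂ →
      min Y₁.card 2 + min Y₂.card 2 ≤ min X₁.card 2 + min X₂.card 2) :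
    min X₁.card 2 = 2 ∧ min X₂.card 2 = 2 ∧
      -- agent 1 weighted-envies agent 2 even up to one good (w₁ = 10, w₂ = 1):
      ¬ (X₂ = ∅ ∨ ∃ g ∈ X₂,
        ((min ((X₂.erase g).card) 2 : ℝ)) / 1 ≤ ((min X₁.card 2 : ℝ)) / 10) := by
  obtain ⟨h₁, h₂⟩ := min_card_eq_of_welfare_max 2 hG.ge hmax
  refine ⟨h₁, h₂, ?_⟩
  rintro (hempty | ⟨g, hg, hle⟩)
  · simp [hempty] at h₂
  · have hX₁ : (min (X₁.card : ℝ) 2) = 2 := by exact_mod_cast h₁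
    have hX₂ := one_le_min_card_erase hg h₂
    rw [hX₁] at hle
    linarith

theorem wef1_failure_example {G : Type*} [DecidableEq G] [Fintype G]
    (hG : Fintype.card G = 4)
    (X₁ X₂ : Finset G) (hdisj : Disjoint X₁ X₂)
    -- X maximizes utilitarian social welfare with v_i(S) = min(|S|,2):
    (hmax : ∀ Y₁ Y₂ : Finset G, Disjoint Y₁ Y₂ →
      min Y₁.card 2 + min Y₂.card 2 ≤ min X₁.card 2 + min X₂.card 2) :
    min X₁.card 2 = 2 ∧ min X₂.card 2 = 2 ∧
      -- agent 1 weighted-envies agent 2 even up to one good (w₁ = 10, w₂ = 1):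
      ¬ (X₂ = ∅ ∨ ∃ g ∈ X₂,
        ((min ((X₂.erase g).card) 2 : ℝ)) / 1 ≤ ((min X₁.card 2 : ℝ)) / 10) :=
  wef1_failure_example_general hG X₁ X₂ hmax
end

section
/- The maximin share of an agent with matroid rank valuation v over m goods among n agents is at least ⌊v(G)/n⌋: formally, MMS = max over partitions (X_1,…,X_n) of G of min_j v(X_j) satisfies MMS ≥ ⌊v(G)/n⌋ when v is a matroid rank function. -/
def IsMRF {G : Type*} [DecidableEq G] (v : Finset G → ℤ) : Prop :=
  v ∅ = 0 ∧
  (∀ (S : Finset G) (g : G), v (insert g S) - v S = 0 ∨ v (insert g S) - v S = 1) ∧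
  (∀ (S T : Finset G) (g : G), S ⊆ T → v (insert g T) - v T ≤ v (insert g S) - v S)

section Aux
variable {G : Type*} [DecidableEq G] {v : Finset G → ℤ}

lemma mrf_insert_ge (hv : IsMRF v) (S : Finset G) (g : G) : v S ≤ v (insert g S) := by
  rcases hv.2.1 S g with h | h <;> omega

lemma mrf_insert_le (hv : IsMRF v) (S : Finset G) (g : G) : v (insert g S) ≤ v S + 1 := by
  rcases hv.2.1 S g with h | h <;> omega

lemma mrf_union_ge (hv : IsMRF v) (S A : Finset G) : v S ≤ v (S ∪ A) := by
  induction A using Finset.induction_on with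
  | empty => simp
  | insert _ _ ha ih =>
    rw [Finset.union_insert]
    exact ih.trans (mrf_insert_ge hv _ _)

lemma mrf_mono (hv : IsMRF v) {S T : Finset G} (h : S ⊆ T) : v S ≤ v T := by
  have := mrf_union_ge hv S T
  rwa [Finset.union_eq_right.mpr h] at this

lemma mrf_union_le (hv : IsMRF v) (S A : Finset G) : v (S ∪ A) ≤ v S + A.card := by
  induction A using Finset.induction_on with
  | empty => simp
  | @insert a A ha ih =>
    rw [Finset.union_insert, Finset.card_insert_of_notMem ha]
    have := mrf_insert_le hv (S ∪ A) a
    push_cast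
    omega

lemma mrf_card_le (hv : IsMRF v) (S : Finset G) : v S ≤ S.card := by
  have := mrf_union_le hv ∅ S
  simpa [hv.1] using this

lemma mrf_propagate (hv : IsMRF v) {B : Finset G} (h : ∀ g, v (insert g B) = v B)
    (A : Finset G) : v (B ∪ A) = v B := by
  induction A using Finset.induction_on with
  | empty => simp
  | @insert a A ha ih =>
    rw [Finset.union_insert]
    have h1 := hv.2.2 B (B ∪ A) a Finset.subset_union_left
    have h2 := mrf_insert_ge hv (B ∪ A) a
    have h3 := h a
    omega

lemma mrf_exists_basis [Fintype G] (hv : IsMRF v) :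
    ∃ B : Finset G, v B = B.card ∧ v B = v (Finset.univ : Finset G) := by
  classical
  obtain ⟨B, hBmem, hBmax⟩ := Finset.exists_max_image
    ((Finset.univ : Finset (Finset G)).filter (fun B => v B = B.card)) Finset.card
    ⟨∅, by simp [hv.1]⟩
  simp only [Finset.mem_filter, Finset.mem_univ, true_and] at hBmem
  refine ⟨B, hBmem, ?_⟩
  by_contra hne
  have hlt : v B < v Finset.univ := lt_of_le_of_ne (mrf_mono hv (Finset.subset_univ B)) hne
  -- not all increments are zero
  by_cases hall : ∀ g, v (insert g B) = v B
  · have := mrf_propagate hv hall Finset.univ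
    rw [Finset.union_eq_right.mpr (Finset.subset_univ B)] at this
    omega
  · push_neg at hall
    obtain ⟨g, hg⟩ := hall
    have hinc : v (insert g B) = v B + 1 := by
      rcases hv.2.1 B g with h | h <;> omega
    have hgB : g ∉ B := by
      intro hgB
      rw [Finset.insert_eq_self.mpr hgB] at hinc
      omega
    have hmem : insert g B ∈ (Finset.univ : Finset (Finset G)).filter (fun B => v B = B.card) := by
      simp only [Finset.mem_filter, Finset.mem_univ, true_and]
      rw [hinc, hBmem, Finset.card_insert_of_notMem hgB]
      push_cast; ring
    have := hBmax _ hmem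
    rw [Finset.card_insert_of_notMem hgB] at this
    omega

lemma mrf_subset_basis (hv : IsMRF v) {B S : Finset G} (hB : v B = B.card) (h : S ⊆ B) :
    v S = S.card := by
  have h1 : v B ≤ v S + (B \ S).card := by
    have := mrf_union_le hv S (B \ S)
    rwa [Finset.union_sdiff_of_subset h] at this
  have h2 : (B \ S).card + S.card = B.card := Finset.card_sdiff_add_card_eq_card h
  have h3 := mrf_card_le hv S
  have h4 : (0:ℤ) ≤ (B \ S).card := by positivity
  omega

end Aux

/-- The maximin share is at least `⌊v(G)/n⌋`: some partition of the goods into `n`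
bundles gives every bundle value at least `⌊v(G)/n⌋`. -/
theorem mms_ge_floor {G : Type*} [DecidableEq G] [Fintype G] {n : ℕ} (hn : 1 ≤ n)
    (v : Finset G → ℤ) (hv : IsMRF v) :
    ∃ X : Fin n → Finset G,
      (∀ i j, i ≠ j → Disjoint (X i) (X j)) ∧
      (Finset.univ.biUnion X = (Finset.univ : Finset G)) ∧
      ∀ j : Fin n, v (Finset.univ : Finset G) / (n : ℤ) ≤ v (X j) := by
  classical
  obtain ⟨B, hBcard, hBuniv⟩ := mrf_exists_basis hv
  set k := B.card with hk
  set q := k / n with hq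
  have hnpos : 0 < n := hn
  set e := B.equivFin with he
  set idx : G → ℕ := fun x => if h : x ∈ B then (e ⟨x, h⟩ : ℕ) else 0 with hidx
  set gf : G → Fin n := fun x => ⟨idx x % n, Nat.mod_lt _ hnpos⟩ with hgf
  refine ⟨fun j => Finset.univ.filter (fun x => gf x = j), ?_, ?_, ?_⟩
  · intro i j hij
    rw [Finset.disjoint_left]
    intro x hxi hxj
    simp only [Finset.mem_filter] at hxi hxj
    exact hij (hxi.2 ▸ hxj.2 ▸ rfl)
  · ext x
    simp only [Finset.mem_biUnion, Finset.mem_filter, Finset.mem_univ, true_and,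
      iff_true]
    exact ⟨gf x, rfl⟩
  · intro j
    set S : Finset G := (Finset.univ.filter (fun x => gf x = j)) ∩ B with hS
    have hSsub : S ⊆ B := Finset.inter_subset_right
    have hvS : v S = S.card := mrf_subset_basis hv hBcard hSsub
    -- injection from Fin q into S
    have hcount : q ≤ S.card := by
      have hlt : ∀ t : Fin q, t.val * n + j.val < k := by
        intro t
        have h1 : t.val + 1 ≤ q := t.isLt
        have h2 : (t.val + 1) * n ≤ q * n := Nat.mul_le_mul_right n h1
        have h3 : q * n ≤ k := Nat.div_mul_le_self k n
        have h4 : j.val < n := j.isLt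
        nlinarith [h2, h3, h4]
      set F : Fin q → G := fun t => (e.symm ⟨t.val * n + j.val, hlt t⟩ : {x // x ∈ B})
        with hF
      have hmaps : ∀ t : Fin q, F t ∈ S := by
        intro t
        have hmemB : (F t : G) ∈ B := (e.symm ⟨t.val * n + j.val, hlt t⟩).2
        have hidxF : idx (F t) = t.val * n + j.val := by
          simp only [hidx]
          rw [dif_pos hmemB]
          have : (⟨(F t : G), hmemB⟩ : {x // x ∈ B}) = e.symm ⟨t.val * n + j.val, hlt t⟩ := by
            apply Subtype.ext; rfl
          rw [this, Equiv.apply_symm_apply]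
        simp only [hS, Finset.mem_inter, Finset.mem_filter, Finset.mem_univ, true_and]
        refine ⟨?_, hmemB⟩
        apply Fin.ext
        simp only [hgf, hidxF]
        rw [Nat.add_comm, Nat.add_mul_mod_self_right, Nat.mod_eq_of_lt j.isLt]
      have hinj : Set.InjOn F (Finset.univ : Finset (Fin q)) := by
        intro t1 _ t2 _ hEq
        have : e.symm ⟨t1.val * n + j.val, hlt t1⟩ = e.symm ⟨t2.val * n + j.val, hlt t2⟩ :=
          Subtype.ext hEq
        have := e.symm.injective this
        have hvals : t1.val * n + j.val = t2.val * n + j.val := congrArg Fin.val this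
        have : t1.val = t2.val := by
          have := Nat.add_right_cancel hvals
          exact Nat.eq_of_mul_eq_mul_right hnpos this
        exact Fin.ext this
      have := Finset.card_le_card_of_injOn F (fun t _ => hmaps t) hinj
      simpa using this
    have h1 : v (Finset.univ : Finset G) / (n : ℤ) = (q : ℤ) := by
      rw [← hBuniv, hBcard]
      exact (Int.natCast_div k n).symm
    have h2 : v S ≤ v (Finset.univ.filter (fun x => gf x = j)) :=
      mrf_mono hv Finset.inter_subset_left
    calc v (Finset.univ : Finset G) / (n : ℤ) = (q : ℤ) := h1
      _ ≤ (S.card : ℤ) := by exact_mod_cast hcount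
      _ = v S := hvS.symm
      _ ≤ _ := h2
end
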